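/- arXiv:1510.07557 — 2 statements merged into one kernel-verified Lean document; each statement's English description precedes it below -/
import Mathlib

section
/- For any partition a = x₁ < ⋯ < xₙ = b and any interpolation data y₁,…,yₙ ∈ ℝ, there exists a cubic Hermite spline γ* ∈ Her(x) with γ*(xᵢ) = yᵢ for all i minimizing ∫_a^b |γ''(x)| dx over all γ ∈ Her(x) satisfying γ(xᵢ) = yᵢ for all i. -/
/-!
With the nodal values fixed, a C¹ piecewise cubic is determined by its nodal slopes `d`: a cubic
is determined by its values and slopes at two points, so every piece is the Hermite cubic of the
data, and `∫ |γ''|` becomes a continuous function `E d` of finitely many real parameters. `E` is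
coercive: by the mean value theorem and the fundamental theorem of calculus, a nodal slope
differs from the secant slope of the data on an adjacent piece by at most `∫ |γ''|` over that
piece. Hence `E` attains its minimum, and the Hermite cubics of a minimizer glue to a C¹ spline.
-/

open Set MeasureTheory Filter

noncomputable section

/-- A function is a cubic polynomial on a set. -/
def IsCubicOn (γ : ℝ → ℝ) (s : Set ℝ) : Prop :=
  ∃ p : Polynomial ℝ, p.natDegree ≤ 3 ∧ ∀ t ∈ s, γ t = p.eval t

/-- `γ` is a C¹ cubic Hermite spline on `[x 0, x n]` with nodes `x 0 < ⋯ < x n`. -/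
def IsHermiteSpline {n : ℕ} (x : Fin (n + 1) → ℝ) (γ : ℝ → ℝ) : Prop :=
  ContDiffOn ℝ 1 γ (Set.Icc (x 0) (x (Fin.last n))) ∧
    ∀ i : Fin n, IsCubicOn γ (Set.Icc (x i.castSucc) (x i.succ))

/-- The L¹ norm of the second derivative of `γ` over `[x 0, x n]`. -/
def L1E {n : ℕ} (x : Fin (n + 1) → ℝ) (γ : ℝ → ℝ) : ℝ :=
  ∫ t in (x 0)..(x (Fin.last n)), |deriv (deriv γ) t|

/-- `F_x`: union over all nodal data `y` of the minimizers of `∫|γ''|` among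
splines interpolating `y`; equivalently, the splines that minimize `∫|γ''|`
among all splines with the same nodal values. -/
def Fx {n : ℕ} (x : Fin (n + 1) → ℝ) : Set (ℝ → ℝ) :=
  {γ | IsHermiteSpline x γ ∧
    ∀ δ, IsHermiteSpline x δ → (∀ i, δ (x i) = γ (x i)) → L1E x γ ≤ L1E x δ}

open Polynomial

def hermiteCubic (a b ya yb da db : ℝ) : ℝ[X] :=
  C ya + C da * (X - C a)
    + C ((3 * (yb - ya) - (2 * da + db) * (b - a)) / (b - a) ^ 2) * (X - C a) ^ 2
    + C (((da + db) * (b - a) - 2 * (yb - ya)) / (b - a) ^ 3) * (X - C a) ^ 3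

section HermiteCubic

variable {a b : ℝ} (ya yb da db : ℝ)

lemma natDegree_hermiteCubic_le : (hermiteCubic a b ya yb da db).natDegree ≤ 3 := by
  unfold hermiteCubic
  compute_degree

lemma eval_hermiteCubic_left : (hermiteCubic a b ya yb da db).eval a = ya := by
  simp [hermiteCubic]

lemma eval_hermiteCubic_right (hab : a ≠ b) : (hermiteCubic a b ya yb da db).eval b = yb := by
  have : b - a ≠ 0 := sub_ne_zero.2 hab.symm
  simp only [hermiteCubic, eval_add, eval_mul, eval_C, eval_pow, eval_sub, eval_X]
  field_simp
  ring

lemma eval_derivative_hermiteCubic (t : ℝ) :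
    (derivative (hermiteCubic a b ya yb da db)).eval t =
      da + 2 * ((3 * (yb - ya) - (2 * da + db) * (b - a)) / (b - a) ^ 2) * (t - a)
        + 3 * (((da + db) * (b - a) - 2 * (yb - ya)) / (b - a) ^ 3) * (t - a) ^ 2 := by
  simp only [hermiteCubic, derivative_add, derivative_C, derivative_mul, zero_mul, derivative_sub,
    derivative_X, sub_zero, mul_one, zero_add, derivative_pow, Nat.cast_ofNat, Nat.add_one_sub_one,
    pow_one, eval_add, eval_C, eval_mul, eval_sub, eval_X, eval_pow]
  ring

lemma eval_derivative_hermiteCubic_left :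
    (derivative (hermiteCubic a b ya yb da db)).eval a = da := by
  simp [eval_derivative_hermiteCubic]

lemma eval_derivative_hermiteCubic_right (hab : a ≠ b) :
    (derivative (hermiteCubic a b ya yb da db)).eval b = db := by
  have : b - a ≠ 0 := sub_ne_zero.2 hab.symm
  rw [eval_derivative_hermiteCubic]
  field_simp
  ring

lemma eval_derivative_derivative_hermiteCubic (t : ℝ) :
    (derivative (derivative (hermiteCubic a b ya yb da db))).eval t =
      2 * ((3 * (yb - ya) - (2 * da + db) * (b - a)) / (b - a) ^ 2)
        + 6 * (((da + db) * (b - a) - 2 * (yb - ya)) / (b - a) ^ 3) * (t - a) := by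
  simp only [hermiteCubic, derivative_add, derivative_C, derivative_mul, zero_mul, derivative_sub,
    derivative_X, sub_zero, mul_one, zero_add, derivative_pow, Nat.cast_ofNat, Nat.add_one_sub_one,
    pow_one, eval_add, eval_mul, eval_C, eval_sub, eval_X]
  ring

end HermiteCubic

lemma sq_X_sub_C_dvd_of_eval_eq_zero {p : ℝ[X]} {a : ℝ} (h0 : p.eval a = 0)
    (h1 : (derivative p).eval a = 0) : (X - C a) ^ 2 ∣ p := by
  rcases eq_or_ne p 0 with rfl | hp
  · simp
  rw [← le_rootMultiplicity_iff hp]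
  exact (one_lt_rootMultiplicity_iff_isRoot hp).2 ⟨h0, h1⟩

lemma eq_zero_of_natDegree_le_three {p : ℝ[X]} (hp : p.natDegree ≤ 3) {a b : ℝ} (hab : a ≠ b)
    (ha : p.eval a = 0) (ha' : (derivative p).eval a = 0)
    (hb : p.eval b = 0) (hb' : (derivative p).eval b = 0) : p = 0 := by
  have hcop : IsCoprime ((X - C a) ^ 2) ((X - C b) ^ 2) :=
    ((isCoprime_X_sub_C_of_isUnit_sub (sub_ne_zero.2 hab).isUnit).pow)
  refine eq_zero_of_dvd_of_natDegree_lt (hcop.mul_dvd (sq_X_sub_C_dvd_of_eval_eq_zero ha ha')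
    (sq_X_sub_C_dvd_of_eval_eq_zero hb hb')) ?_
  rw [natDegree_mul (by simp [X_sub_C_ne_zero]) (by simp [X_sub_C_ne_zero])]
  simp only [natDegree_pow, natDegree_X_sub_C]
  omega

lemma eq_hermiteCubic {p : ℝ[X]} (hp : p.natDegree ≤ 3) {a b : ℝ} (hab : a ≠ b) :
    p = hermiteCubic a b (p.eval a) (p.eval b) ((derivative p).eval a)
      ((derivative p).eval b) := by
  rw [← sub_eq_zero]
  refine eq_zero_of_natDegree_le_three
    ((natDegree_sub_le _ _).trans (max_le hp (natDegree_hermiteCubic_le ..))) hab ?_ ?_ ?_ ?_ <;>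
  simp [eval_hermiteCubic_left, eval_hermiteCubic_right _ _ _ _ hab,
    eval_derivative_hermiteCubic_left, eval_derivative_hermiteCubic_right _ _ _ _ hab]

lemma abs_eval_derivative_le (p : ℝ[X]) {a b t : ℝ} (hab : a < b) (ht : t ∈ Icc a b) :
    |(derivative p).eval t| ≤
      |p.eval b - p.eval a| / (b - a) + ∫ s in a..b, |(derivative (derivative p)).eval s| := by
  obtain ⟨ξ, hξ, hslope⟩ := exists_hasDerivAt_eq_slope (fun s => p.eval s)
    (fun s => (derivative p).eval s) hab p.continuousOn (fun s _ => p.hasDerivAt s)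
  have hftc : (derivative p).eval t - (derivative p).eval ξ =
      ∫ s in ξ..t, (derivative (derivative p)).eval s :=
    (intervalIntegral.integral_eq_sub_of_hasDerivAt (fun s _ => (derivative p).hasDerivAt s)
      ((derivative (derivative p)).continuous.intervalIntegrable _ _)).symm
  have hsub : uIoc ξ t ⊆ Ioc a b := by
    rw [← uIoc_of_le hab.le]
    exact uIoc_subset_uIoc_of_uIcc_subset_uIcc
      (uIcc_subset_uIcc (Icc_subset_uIcc (Ioo_subset_Icc_self hξ)) (Icc_subset_uIcc ht))
  have hint : |∫ s in ξ..t, (derivative (derivative p)).eval s| ≤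
      ∫ s in a..b, |(derivative (derivative p)).eval s| :=
    calc |∫ s in ξ..t, (derivative (derivative p)).eval s|
        = ‖∫ s in ξ..t, (derivative (derivative p)).eval s‖ := (Real.norm_eq_abs _).symm
      _ ≤ ∫ s in uIoc ξ t, ‖(derivative (derivative p)).eval s‖ :=
        intervalIntegral.norm_integral_le_integral_norm_uIoc
      _ ≤ ∫ s in Ioc a b, ‖(derivative (derivative p)).eval s‖ :=
        setIntegral_mono_set (derivative (derivative p)).continuous.norm.integrableOn_Ioc
          (ae_of_all _ fun _ => norm_nonneg _) hsub.eventuallyLE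
      _ = ∫ s in a..b, |(derivative (derivative p)).eval s| := by
        simp [intervalIntegral.integral_of_le hab.le]
  have hξval : |(derivative p).eval ξ| = |p.eval b - p.eval a| / (b - a) := by
    rw [hslope, abs_div, abs_of_pos (sub_pos.2 hab)]
  have htri := abs_sub_abs_le_abs_sub ((derivative p).eval t) ((derivative p).eval ξ)
  rw [hftc] at htri
  linarith

lemma contDiff_one_ite_le {f : ℝ → ℝ} {a : ℝ} (hf : ContDiff ℝ 1 f) (h0 : f a = 0)
    (h1 : deriv f a = 0) : ContDiff ℝ 1 fun t => if a ≤ t then f t else 0 := by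
  have hd : Differentiable ℝ f := hf.differentiable one_ne_zero
  have hderiv : ∀ t, HasDerivAt (fun t => if a ≤ t then f t else 0)
      (if a ≤ t then deriv f t else 0) t := by
    intro t
    rcases lt_trichotomy t a with ht | rfl | ht
    · rw [if_neg ht.not_ge]
      exact (hasDerivAt_const t 0).congr_of_eventuallyEq
        (eventually_of_mem (Iio_mem_nhds ht) fun s hs => if_neg (not_le.2 hs))
    · rw [if_pos le_rfl, h1]
      have hl : HasDerivWithinAt (fun s => if t ≤ s then f s else 0) 0 (Iic t) t :=
        (hasDerivAt_const t (0 : ℝ)).hasDerivWithinAt.congr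
          (fun s hs => by split_ifs with h; exacts [by rw [le_antisymm hs h, h0], rfl])
          (by simp [h0])
      have hr : HasDerivWithinAt (fun s => if t ≤ s then f s else 0) 0 (Ici t) t :=
        (h1 ▸ (hd t).hasDerivAt).hasDerivWithinAt.congr (fun s hs => if_pos hs) (if_pos le_rfl)
      simpa [Iic_union_Ici] using hl.union hr
    · rw [if_pos ht.le]
      exact (hd t).hasDerivAt.congr_of_eventuallyEq
        (eventually_of_mem (Ioi_mem_nhds ht) fun s hs => if_pos (le_of_lt hs))
  rw [contDiff_one_iff_deriv]
  refine ⟨fun t => (hderiv t).differentiableAt, ?_⟩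
  rw [funext fun t => (hderiv t).deriv]
  exact (hf.continuous_deriv le_rfl).if_le continuous_const continuous_const continuous_id
    fun t ht => by rw [← ht, h1]

/-- When the pieces match to first order at `a (k + 1)`, the jump `P (k + 1) - P k` has a double
zero there, so switching it on at that node keeps the sum `C¹`. -/
def splineOfPieces (a : ℕ → ℝ) (P : ℕ → ℝ[X]) (m : ℕ) (t : ℝ) : ℝ :=
  (P 0).eval t + ∑ k ∈ Finset.range m, if a (k + 1) ≤ t then (P (k + 1) - P k).eval t else 0

section SplineOfPieces

variable {a : ℕ → ℝ} {P : ℕ → ℝ[X]} {m : ℕ}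

lemma contDiff_splineOfPieces
    (hval : ∀ k < m, (P (k + 1)).eval (a (k + 1)) = (P k).eval (a (k + 1)))
    (hder : ∀ k < m,
      (derivative (P (k + 1))).eval (a (k + 1)) = (derivative (P k)).eval (a (k + 1))) :
    ContDiff ℝ 1 (splineOfPieces a P m) := by
  have hpoly (p : ℝ[X]) : ContDiff ℝ 1 fun t => p.eval t := by
    simpa using p.contDiff_aeval (𝕜 := ℝ) 1
  refine (hpoly (P 0)).add
    (ContDiff.sum fun k hk => contDiff_one_ite_le (hpoly (P (k + 1) - P k)) ?_ ?_)
  · simp [hval k (Finset.mem_range.1 hk)]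
  · rw [Polynomial.deriv]
    simp [hder k (Finset.mem_range.1 hk)]

lemma splineOfPieces_eq (ha : StrictMonoOn a (Iic (m + 1)))
    (hval : ∀ k < m, (P (k + 1)).eval (a (k + 1)) = (P k).eval (a (k + 1)))
    {i : ℕ} (hi : i ≤ m) {t : ℝ} (ht : t ∈ Icc (a i) (a (i + 1))) :
    splineOfPieces a P m t = (P i).eval t := by
  have hon : ∀ k ∈ Finset.range i, (if a (k + 1) ≤ t then (P (k + 1) - P k).eval t else 0) =
      (P (k + 1)).eval t - (P k).eval t := by
    intro k hk
    have hk := Finset.mem_range.1 hk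
    rw [if_pos ((ha.monotoneOn (mem_Iic.2 (by omega)) (mem_Iic.2 (by omega)) hk).trans ht.1),
      eval_sub]
  have hoff : ∀ k ∈ Finset.Ico i m,
      (if a (k + 1) ≤ t then (P (k + 1) - P k).eval t else 0) = 0 := by
    intro k hk
    obtain ⟨hik, hkm⟩ := Finset.mem_Ico.1 hk
    split_ifs with h
    · obtain rfl | hik := eq_or_lt_of_le hik
      · simp [le_antisymm ht.2 h, hval i hkm]
      · exact absurd (ht.2.trans_lt (ha (mem_Iic.2 (by omega)) (mem_Iic.2 (by omega))
          (by omega))) h.not_gt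
    · rfl
  rw [splineOfPieces, ← Finset.sum_range_add_sum_Ico _ hi, Finset.sum_congr rfl hon,
    Finset.sum_eq_zero hoff, Finset.sum_range_sub (fun k => (P k).eval t)]
  ring

end SplineOfPieces

lemma eqOn_deriv_deriv_of_eqOn {γ : ℝ → ℝ} {q : ℝ[X]} {s : Set ℝ} (hs : IsOpen s)
    (h : EqOn γ (fun t => q.eval t) s) :
    EqOn (deriv (deriv γ)) (fun t => (derivative (derivative q)).eval t) s := by
  have h1 : EqOn (deriv γ) (fun t => (derivative q).eval t) s :=
    fun t ht => (h.deriv hs ht).trans q.deriv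
  exact fun t ht => (h1.deriv hs ht).trans (derivative q).deriv

open Fin.NatCast in
lemma Fin.natCast_val_add_one {n : ℕ} (i : Fin n) : (((i : ℕ) + 1 : ℕ) : Fin (n + 1)) = i.succ := by
  rw [Nat.cast_succ, Fin.coe_eq_castSucc, Fin.coeSucc_eq_succ]

open Fin.NatCast in
lemma L1E_eq_sum {n : ℕ} {x : Fin (n + 1) → ℝ} (hx : StrictMono x) {γ : ℝ → ℝ}
    (Q : Fin n → ℝ[X]) (hQ : ∀ i, EqOn γ (fun t => (Q i).eval t) (Icc (x i.castSucc) (x i.succ))) :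
    L1E x γ = ∑ i, ∫ t in x i.castSucc..x i.succ, |(derivative (derivative (Q i))).eval t| := by
  have hQ' (i : Fin n) : EqOn (fun t => |deriv (deriv γ) t|)
      (fun t => |(derivative (derivative (Q i))).eval t|) (uIoo (x i.castSucc) (x i.succ)) := by
    rw [uIoo_of_le (hx Fin.castSucc_lt_succ).le]
    exact fun t ht => congrArg abs
      (eqOn_deriv_deriv_of_eqOn isOpen_Ioo ((hQ i).mono Ioo_subset_Icc_self) ht)
  have hint (k : ℕ) (hk : k < n) : IntervalIntegrable (fun t => |deriv (deriv γ) t|) volume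
      (x k) (x (k + 1 : ℕ)) := by
    obtain ⟨i, rfl⟩ : ∃ i : Fin n, (i : ℕ) = k := ⟨⟨k, hk⟩, rfl⟩
    rw [Fin.coe_eq_castSucc, Fin.natCast_val_add_one]
    exact ((derivative (derivative (Q _))).continuous.abs.intervalIntegrable _ _).congr_uIoo
      (hQ' _).symm
  rw [L1E, ← Fin.natCast_eq_last, ← Fin.natCast_zero,
    ← intervalIntegral.sum_integral_adjacent_intervals hint, ← Fin.sum_univ_eq_sum_range]
  refine Finset.sum_congr rfl fun i _ => ?_
  rw [Fin.coe_eq_castSucc, Fin.natCast_val_add_one]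
  exact intervalIntegral.integral_congr_uIoo (hQ' i)

def hermitePiece {n : ℕ} (x y d : Fin (n + 1) → ℝ) (i : Fin n) : ℝ[X] :=
  hermiteCubic (x i.castSucc) (x i.succ) (y i.castSucc) (y i.succ) (d i.castSucc) (d i.succ)

def hermiteEnergy {n : ℕ} (x y d : Fin (n + 1) → ℝ) : ℝ :=
  ∑ i, ∫ t in x i.castSucc..x i.succ, |(derivative (derivative (hermitePiece x y d i))).eval t|

lemma Fin.exists_castSucc_or_succ_eq {n : ℕ} (hn : 0 < n) (j : Fin (n + 1)) :
    ∃ i : Fin n, j = i.castSucc ∨ j = i.succ := by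
  obtain ⟨m, rfl⟩ := Nat.exists_eq_add_one_of_ne_zero hn.ne'
  rcases j.eq_castSucc_or_eq_last with ⟨i, rfl⟩ | rfl
  · exact ⟨i, Or.inl rfl⟩
  · exact ⟨Fin.last m, Or.inr (Fin.succ_last m).symm⟩

section HermiteEnergy

variable {n : ℕ} {x : Fin (n + 1) → ℝ}

lemma continuous_hermiteEnergy (y : Fin (n + 1) → ℝ) : Continuous (hermiteEnergy x y) := by
  refine continuous_finsetSum _ fun i _ =>
    intervalIntegral.continuous_parametric_intervalIntegral_of_continuous' ?_ _ _
  simp only [hermitePiece, eval_derivative_derivative_hermiteCubic]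
  fun_prop

variable (hx : StrictMono x)
include hx

lemma integral_hermitePiece_le_hermiteEnergy (y d : Fin (n + 1) → ℝ) (i : Fin n) :
    ∫ t in x i.castSucc..x i.succ, |(derivative (derivative (hermitePiece x y d i))).eval t| ≤
      hermiteEnergy x y d :=
  Finset.single_le_sum (f := fun i => ∫ t in x i.castSucc..x i.succ,
      |(derivative (derivative (hermitePiece x y d i))).eval t|)
    (fun _ _ => intervalIntegral.integral_nonneg (hx Fin.castSucc_lt_succ).le
      fun _ _ => abs_nonneg _) (Finset.mem_univ i)

lemma abs_le_slope_add_hermiteEnergy (y d : Fin (n + 1) → ℝ) {i : Fin n} {j : Fin (n + 1)}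
    (hj : j = i.castSucc ∨ j = i.succ) :
    |d j| ≤ |y i.succ - y i.castSucc| / (x i.succ - x i.castSucc) + hermiteEnergy x y d := by
  have hab : x i.castSucc < x i.succ := hx Fin.castSucc_lt_succ
  have hbound := abs_eval_derivative_le (hermitePiece x y d i) hab
    (t := x j) (by rcases hj with rfl | rfl <;> simp [hab.le])
  have hpiece := integral_hermitePiece_le_hermiteEnergy hx y d i
  rcases hj with rfl | rfl <;>
  simp only [hermitePiece, eval_hermiteCubic_left, eval_hermiteCubic_right _ _ _ _ hab.ne,
    eval_derivative_hermiteCubic_left, eval_derivative_hermiteCubic_right _ _ _ _ hab.ne]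
    at hbound hpiece ⊢ <;>
  linarith

lemma exists_norm_le_add_hermiteEnergy (hn : 0 < n) (y : Fin (n + 1) → ℝ) :
    ∃ C, ∀ d, ‖d‖ ≤ C + hermiteEnergy x y d := by
  choose ι hι using Fin.exists_castSucc_or_succ_eq hn
  let slope (j : Fin (n + 1)) :=
    |y (ι j).succ - y (ι j).castSucc| / (x (ι j).succ - x (ι j).castSucc)
  have hslope (j : Fin (n + 1)) : 0 ≤ slope j :=
    div_nonneg (abs_nonneg _) (sub_pos.2 (hx Fin.castSucc_lt_succ)).le
  refine ⟨∑ j, slope j, fun d => (pi_norm_le_iff_of_nonempty d).2 fun j => ?_⟩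
  calc ‖d j‖ = |d j| := Real.norm_eq_abs _
    _ ≤ slope j + hermiteEnergy x y d := abs_le_slope_add_hermiteEnergy hx y d (hι j)
    _ ≤ ∑ j, slope j + hermiteEnergy x y d := by
      gcongr
      exact Finset.single_le_sum (fun j _ => hslope j) (Finset.mem_univ j)

end HermiteEnergy

lemma exists_forall_hermiteEnergy_le {n : ℕ} {x : Fin (n + 1) → ℝ} (hx : StrictMono x)
    (hn : 0 < n) (y : Fin (n + 1) → ℝ) :
    ∃ d, ∀ d', hermiteEnergy x y d ≤ hermiteEnergy x y d' := by
  obtain ⟨C, hC⟩ := exists_norm_le_add_hermiteEnergy hx hn y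
  refine (continuous_hermiteEnergy y).exists_forall_le (tendsto_atTop_mono (fun d => ?_)
    (tendsto_atTop_add_const_right _ (-C) tendsto_norm_cocompact_atTop))
  linarith [hC d]

lemma eval_derivative_eq_derivWithin {γ : ℝ → ℝ} {q : ℝ[X]} {a b t : ℝ} {s : Set ℝ}
    (hab : a < b) (hs : Icc a b ⊆ s) (hγ : DifferentiableOn ℝ γ s)
    (h : EqOn γ (fun t => q.eval t) (Icc a b))
    (ht : t ∈ Icc a b) : (derivative q).eval t = derivWithin γ s t := by
  rw [← derivWithin_subset hs (uniqueDiffOn_Icc hab t ht) (hγ t (hs ht)),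
    derivWithin_congr h (h ht),
    (q.hasDerivAt t).hasDerivWithinAt.derivWithin (uniqueDiffOn_Icc hab t ht)]

/-- The nodal slopes are taken within `[x 0, x n]`, the only place where `γ` is known to be `C¹`:
at the end nodes `deriv γ` may be junk. -/
lemma L1E_eq_hermiteEnergy {n : ℕ} {x : Fin (n + 1) → ℝ} (hx : StrictMono x) {γ : ℝ → ℝ}
    (hγ : IsHermiteSpline x γ) {y : Fin (n + 1) → ℝ} (hy : ∀ i, γ (x i) = y i) :
    L1E x γ = hermiteEnergy x y fun j => derivWithin γ (Icc (x 0) (x (Fin.last n))) (x j) := by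
  obtain ⟨hC1, hcubic⟩ := hγ
  choose Q hdeg hQ using hcubic
  rw [L1E_eq_sum hx Q hQ, hermiteEnergy]
  refine Finset.sum_congr rfl fun i _ => ?_
  have hab : x i.castSucc < x i.succ := hx Fin.castSucc_lt_succ
  have hsub : Icc (x i.castSucc) (x i.succ) ⊆ Icc (x 0) (x (Fin.last n)) :=
    Icc_subset_Icc (hx.monotone (Fin.zero_le _)) (hx.monotone (Fin.le_last _))
  have hderiv := fun t (ht : t ∈ Icc (x i.castSucc) (x i.succ)) =>
    eval_derivative_eq_derivWithin hab hsub (hC1.differentiableOn one_ne_zero) (hQ i) ht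
  have hpiece :
      Q i = hermitePiece x y (fun j => derivWithin γ (Icc (x 0) (x (Fin.last n))) (x j)) i := by
    rw [eq_hermiteCubic (hdeg i) hab.ne, hermitePiece, ← hQ i _ (left_mem_Icc.2 hab.le),
      ← hQ i _ (right_mem_Icc.2 hab.le), hy, hy, hderiv _ (left_mem_Icc.2 hab.le),
      hderiv _ (right_mem_Icc.2 hab.le)]
  rw [hpiece]

open Fin.NatCast in
lemma exists_contDiff_eqOn_hermitePiece {n : ℕ} {x : Fin (n + 1) → ℝ} (hx : StrictMono x)
    (hn : 0 < n) (y d : Fin (n + 1) → ℝ) : ∃ γ : ℝ → ℝ, ContDiff ℝ 1 γ ∧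
      ∀ i, EqOn γ (fun t => (hermitePiece x y d i).eval t) (Icc (x i.castSucc) (x i.succ)) := by
  obtain ⟨m, rfl⟩ := Nat.exists_eq_add_one_of_ne_zero hn.ne'
  let P (k : ℕ) : ℝ[X] :=
    hermiteCubic (x k) (x (k + 1 : ℕ)) (y k) (y (k + 1 : ℕ)) (d k) (d (k + 1 : ℕ))
  have ha : StrictMonoOn (fun k : ℕ => x k) (Iic (m + 1)) := fun k hk l hl hkl =>
    hx (Fin.lt_def.2 (by
      rw [Fin.val_cast_of_lt (Nat.lt_succ_of_le hk), Fin.val_cast_of_lt (Nat.lt_succ_of_le hl)]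
      exact hkl))
  have hne (k : ℕ) (hk : k < m) : x k ≠ x (k + 1 : ℕ) :=
    (ha (mem_Iic.2 (by omega)) (mem_Iic.2 (by omega)) (by omega)).ne
  refine ⟨splineOfPieces (fun k : ℕ => x k) P m, contDiff_splineOfPieces (fun k hk => ?_)
    (fun k hk => ?_), fun i t ht => ?_⟩
  · simp only [P, eval_hermiteCubic_left, eval_hermiteCubic_right _ _ _ _ (hne k hk)]
  · simp only [P, eval_derivative_hermiteCubic_left,
      eval_derivative_hermiteCubic_right _ _ _ _ (hne k hk)]
  · have hP : P i = hermitePiece x y d i := by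
      simp only [P, hermitePiece, Fin.coe_eq_castSucc, Fin.natCast_val_add_one]
    rw [← hP]
    refine splineOfPieces_eq ha (fun k hk => ?_) (Nat.lt_succ_iff.1 i.isLt) ?_
    · simp only [P, eval_hermiteCubic_left, eval_hermiteCubic_right _ _ _ _ (hne k hk)]
    · simpa only [Fin.coe_eq_castSucc, Fin.natCast_val_add_one] using ht

/-- Existence of an L¹ cubic Hermite interpolation spline: for any data `y`
there is a spline interpolating `y` minimizing `∫ |γ''|` among all such splines. -/
theorem stmt7 {n : ℕ} (hn : 1 ≤ n) (x : Fin (n + 1) → ℝ) (hx : StrictMono x)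
    (y : Fin (n + 1) → ℝ) :
    ∃ γs : ℝ → ℝ, IsHermiteSpline x γs ∧ (∀ i, γs (x i) = y i) ∧
      ∀ γ : ℝ → ℝ, IsHermiteSpline x γ → (∀ i, γ (x i) = y i) →
        L1E x γs ≤ L1E x γ := by
  obtain ⟨d, hd⟩ := exists_forall_hermiteEnergy_le hx hn y
  obtain ⟨γs, hC1, hγs⟩ := exists_contDiff_eqOn_hermitePiece hx hn y d
  have hinterp (j : Fin (n + 1)) : γs (x j) = y j := by
    obtain ⟨i, rfl | rfl⟩ := Fin.exists_castSucc_or_succ_eq hn j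
    · rw [hγs i (left_mem_Icc.2 (hx Fin.castSucc_lt_succ).le)]
      exact eval_hermiteCubic_left ..
    · rw [hγs i (right_mem_Icc.2 (hx Fin.castSucc_lt_succ).le)]
      exact eval_hermiteCubic_right _ _ _ _ (hx Fin.castSucc_lt_succ).ne
  refine ⟨γs, ⟨hC1.contDiffOn, fun i => ⟨_, natDegree_hermiteCubic_le .., hγs i⟩⟩, hinterp,
    fun γ hγ hy => ?_⟩
  rw [L1E_eq_sum hx _ hγs, L1E_eq_hermiteEnergy hx hγ hy]
  exact hd _
end
end

section
/- Fix a partition x = (x₁ < ⋯ < xₙ). Let F_x ⊆ Her(x) be the union over all y ∈ ℝⁿ of the sets of minimizers of γ ↦ ∫_a^b |γ''(x)| dx among splines γ ∈ Her(x) with γ(xᵢ) = yᵢ for all i. Then F_x is a closed subset of Her(x). -/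
open Set MeasureTheory Filter

noncomputable section

/-! If `s p → σ` and `δ` is a spline with the nodal values of `σ`, then `δ + s p - σ` is a
spline with the nodal values of `s p`, so `∫|(s p)''| ≤ ∫|(δ + s p - σ)''|`; in the limit
`∫|σ''| ≤ ∫|δ''|`.
The limit is legitimate because `γ ↦ ∫|γ''|` is continuous under pointwise convergence of splines:
on each piece the coefficients of a cubic are linear functions of its values at four points
(Lagrange interpolation), and there `γ''` is the affine function `2 c₂ + 6 c₃ t`. -/

open Topology Polynomial

theorem Polynomial.tendsto_coeff_of_tendsto_eval {𝕜 α : Type*} [NontriviallyNormedField 𝕜]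
    [CompleteSpace 𝕜] {l : Filter α} {S : Set 𝕜} (hS : S.Infinite) {d : ℕ}
    {p : α → 𝕜[X]} {p₀ : 𝕜[X]} (hp : ∀ a, (p a).natDegree ≤ d) (hp₀ : p₀.natDegree ≤ d)
    (h : ∀ t ∈ S, Tendsto (fun a => (p a).eval t) l (𝓝 (p₀.eval t))) (k : ℕ) :
    Tendsto (fun a => (p a).coeff k) l (𝓝 (p₀.coeff k)) := by
  classical
  obtain ⟨F, hFS, hF⟩ := hS.exists_subset_card_eq (d + 1)
  let L : (F → 𝕜) →ₗ[𝕜] 𝕜 := (lcoeff 𝕜 k).comp (Lagrange.interpolate Finset.univ (↑))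
  have coeff_eq : ∀ r : 𝕜[X], r.natDegree ≤ d → r.coeff k = L fun i => r.eval ↑i := by
    intro r hr
    have hdeg : r.degree < (Finset.univ : Finset F).card := by
      rw [Finset.card_univ, Fintype.card_coe, hF]
      exact (degree_le_natDegree.trans (WithBot.coe_le_coe.mpr hr)).trans_lt
        (WithBot.coe_lt_coe.mpr d.lt_succ_self)
    conv_lhs => rw [Lagrange.eq_interpolate Subtype.val_injective.injOn hdeg]
    rfl
  simp only [coeff_eq _ (hp _), coeff_eq _ hp₀]
  exact (L.continuous_of_finiteDimensional.tendsto _).comp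
    (tendsto_pi_nhds.mpr fun i => h i (hFS i.2))

theorem deriv_deriv_eq_of_eqOn_Icc {γ : ℝ → ℝ} {p : ℝ[X]} {u v t : ℝ}
    (h : ∀ t ∈ Icc u v, γ t = p.eval t) (ht : t ∈ Ioo u v) :
    deriv (deriv γ) t = p.derivative.derivative.eval t := by
  have hγ : γ =ᶠ[𝓝 t] fun s => p.eval s :=
    eventually_of_mem (Ioo_mem_nhds ht.1 ht.2) fun s hs => h s (Ioo_subset_Icc_self hs)
  have hγ' : deriv γ =ᶠ[𝓝 t] fun s => p.derivative.eval s :=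
    hγ.deriv.mono fun s hs => by rw [hs, Polynomial.deriv]
  rw [hγ'.deriv_eq, Polynomial.deriv]

theorem Polynomial.eval_derivative_derivative_of_natDegree_le_three {p : ℝ[X]}
    (hp : p.natDegree ≤ 3) (t : ℝ) :
    p.derivative.derivative.eval t = 2 * p.coeff 2 + 6 * p.coeff 3 * t := by
  have hdeg : p.derivative.derivative.natDegree < 2 := by
    have h₁ := natDegree_derivative_le p.derivative
    have h₂ := natDegree_derivative_le p
    omega
  rw [eval_eq_sum_range' hdeg]
  simp only [coeff_derivative, Finset.sum_range_succ, Finset.range_one, Finset.sum_singleton]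
  norm_num
  ring

theorem intervalIntegral_abs_deriv_deriv_eq_of_eqOn_Icc {γ : ℝ → ℝ} {p : ℝ[X]} {u v : ℝ}
    (huv : u ≤ v) (h : ∀ t ∈ Icc u v, γ t = p.eval t) :
    ∫ t in u..v, |deriv (deriv γ) t| = ∫ t in u..v, |p.derivative.derivative.eval t| := by
  rw [intervalIntegral.integral_of_le huv, intervalIntegral.integral_of_le huv,
    integral_Ioc_eq_integral_Ioo, integral_Ioc_eq_integral_Ioo]
  exact setIntegral_congr_fun measurableSet_Ioo fun t ht => by
    simp only [deriv_deriv_eq_of_eqOn_Icc h ht]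

theorem intervalIntegrable_abs_deriv_deriv_of_eqOn_Icc {γ : ℝ → ℝ} {p : ℝ[X]} {u v : ℝ}
    (huv : u ≤ v) (h : ∀ t ∈ Icc u v, γ t = p.eval t) :
    IntervalIntegrable (fun t => |deriv (deriv γ) t|) volume u v := by
  rw [intervalIntegrable_iff_integrableOn_Ioo_of_le huv]
  have hp : IntegrableOn (fun t => |p.derivative.derivative.eval t|) (Ioo u v) :=
    (p.derivative.derivative.continuous.abs.integrableOn_Icc).mono_set Ioo_subset_Icc_self
  exact hp.congr_fun (fun t ht => by simp only [deriv_deriv_eq_of_eqOn_Icc h ht])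
    measurableSet_Ioo

theorem tendsto_intervalIntegral_abs_affine {α : Type*} {l : Filter α} (u v : ℝ)
    {a b : α → ℝ} {a₀ b₀ : ℝ} (ha : Tendsto a l (𝓝 a₀)) (hb : Tendsto b l (𝓝 b₀)) :
    Tendsto (fun i => ∫ t in u..v, |a i + b i * t|) l (𝓝 (∫ t in u..v, |a₀ + b₀ * t|)) := by
  have hcont : Continuous fun c : ℝ × ℝ => ∫ t in u..v, |c.1 + c.2 * t| :=
    intervalIntegral.continuous_parametric_intervalIntegral_of_continuous' (by fun_prop) u v
  exact (hcont.tendsto (a₀, b₀)).comp (ha.prodMk_nhds hb)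

theorem tendsto_intervalIntegral_abs_deriv_deriv_of_isCubicOn {α : Type*} {l : Filter α}
    {u v : ℝ} (huv : u < v) {γ : α → ℝ → ℝ} {γ₀ : ℝ → ℝ}
    (hγ : ∀ i, IsCubicOn (γ i) (Icc u v)) (hγ₀ : IsCubicOn γ₀ (Icc u v))
    (hlim : ∀ t ∈ Icc u v, Tendsto (fun i => γ i t) l (𝓝 (γ₀ t))) :
    Tendsto (fun i => ∫ t in u..v, |deriv (deriv (γ i)) t|) l
      (𝓝 (∫ t in u..v, |deriv (deriv γ₀) t|)) := by
  choose p hp hγp using hγ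
  obtain ⟨p₀, hp₀, hγp₀⟩ := hγ₀
  have integral_eq : ∀ {g : ℝ → ℝ} {r : ℝ[X]}, r.natDegree ≤ 3 →
      (∀ t ∈ Icc u v, g t = r.eval t) →
      ∫ t in u..v, |deriv (deriv g) t| = ∫ t in u..v, |2 * r.coeff 2 + 6 * r.coeff 3 * t| :=
    fun hr hg => by
      simp only [intervalIntegral_abs_deriv_deriv_eq_of_eqOn_Icc huv.le hg,
        eval_derivative_derivative_of_natDegree_le_three hr]
  have hcoeff := tendsto_coeff_of_tendsto_eval (Icc_infinite huv) hp hp₀ fun t ht => by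
    simpa only [← hγp _ t ht, ← hγp₀ t ht] using hlim t ht
  simp only [integral_eq (hp _) (hγp _), integral_eq hp₀ hγp₀]
  exact tendsto_intervalIntegral_abs_affine u v ((hcoeff 2).const_mul 2) ((hcoeff 3).const_mul 6)

theorem intervalIntegral.sum_integral_fin_adjacent_intervals {n : ℕ} {f : ℝ → ℝ}
    (x : Fin (n + 1) → ℝ)
    (hint : ∀ i : Fin n, IntervalIntegrable f volume (x i.castSucc) (x i.succ)) :
    ∑ i : Fin n, ∫ t in x i.castSucc..x i.succ, f t = ∫ t in x 0..x (Fin.last n), f t := by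
  have hcast : ∀ i : Fin n, Fin.clamp i n = i.castSucc := fun i => Fin.ext (by simp [i.is_lt.le])
  have hsucc : ∀ i : Fin n, Fin.clamp (i + 1) n = i.succ := fun i => Fin.ext (by simp [i.is_lt])
  have hsum := sum_integral_adjacent_intervals (a := fun k => x (Fin.clamp k n)) (n := n)
    fun k hk => by simpa only [hcast ⟨k, hk⟩, hsucc ⟨k, hk⟩] using hint ⟨k, hk⟩
  rw [← Fin.sum_univ_eq_sum_range] at hsum
  have h0 : Fin.clamp 0 n = 0 := Fin.ext (by simp)
  have hlast : Fin.clamp n n = Fin.last n := Fin.ext (by simp)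
  simpa only [hcast, hsucc, h0, hlast] using hsum

theorem IsCubicOn.add {γ δ : ℝ → ℝ} {s : Set ℝ} (hγ : IsCubicOn γ s) (hδ : IsCubicOn δ s) :
    IsCubicOn (γ + δ) s := by
  obtain ⟨p, hp, hγp⟩ := hγ
  obtain ⟨q, hq, hδq⟩ := hδ
  exact ⟨p + q, (natDegree_add_le p q).trans (max_le hp hq), fun t ht => by
    simp [hγp t ht, hδq t ht]⟩

theorem IsCubicOn.sub {γ δ : ℝ → ℝ} {s : Set ℝ} (hγ : IsCubicOn γ s) (hδ : IsCubicOn δ s) :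
    IsCubicOn (γ - δ) s := by
  obtain ⟨p, hp, hγp⟩ := hγ
  obtain ⟨q, hq, hδq⟩ := hδ
  exact ⟨p - q, (natDegree_sub_le p q).trans (max_le hp hq), fun t ht => by
    simp [hγp t ht, hδq t ht]⟩

namespace IsHermiteSpline

variable {n : ℕ} {x : Fin (n + 1) → ℝ} {γ δ : ℝ → ℝ}

theorem add (hγ : IsHermiteSpline x γ) (hδ : IsHermiteSpline x δ) :
    IsHermiteSpline x (γ + δ) :=
  ⟨hγ.1.add hδ.1, fun i => (hγ.2 i).add (hδ.2 i)⟩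

theorem sub (hγ : IsHermiteSpline x γ) (hδ : IsHermiteSpline x δ) :
    IsHermiteSpline x (γ - δ) :=
  ⟨hγ.1.sub hδ.1, fun i => (hγ.2 i).sub (hδ.2 i)⟩

theorem L1E_eq_sum (hx : Monotone x) (hγ : IsHermiteSpline x γ) :
    L1E x γ = ∑ i : Fin n, ∫ t in x i.castSucc..x i.succ, |deriv (deriv γ) t| := by
  refine (intervalIntegral.sum_integral_fin_adjacent_intervals x fun i => ?_).symm
  obtain ⟨p, -, hγp⟩ := hγ.2 i
  exact intervalIntegrable_abs_deriv_deriv_of_eqOn_Icc (hx (Fin.castSucc_lt_succ (i := i)).le) hγp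

end IsHermiteSpline

theorem tendsto_L1E {α : Type*} {l : Filter α} {n : ℕ} {x : Fin (n + 1) → ℝ} (hx : StrictMono x)
    {γ : α → ℝ → ℝ} {γ₀ : ℝ → ℝ} (hγ : ∀ i, IsHermiteSpline x (γ i))
    (hγ₀ : IsHermiteSpline x γ₀)
    (hlim : ∀ t ∈ Icc (x 0) (x (Fin.last n)), Tendsto (fun i => γ i t) l (𝓝 (γ₀ t))) :
    Tendsto (fun i => L1E x (γ i)) l (𝓝 (L1E x γ₀)) := by
  simp only [(hγ _).L1E_eq_sum hx.monotone, hγ₀.L1E_eq_sum hx.monotone]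
  refine tendsto_finsetSum _ fun k _ => ?_
  refine tendsto_intervalIntegral_abs_deriv_deriv_of_isCubicOn
    (hx (Fin.castSucc_lt_succ (i := k))) (fun i => (hγ i).2 k) (hγ₀.2 k) fun t ht => hlim t ?_
  exact Icc_subset_Icc (hx.monotone (Fin.zero_le _)) (hx.monotone (Fin.le_last _)) ht

theorem stmt8_general {n : ℕ} (x : Fin (n + 1) → ℝ) (hx : StrictMono x)
    (s : ℕ → ℝ → ℝ) (hs : ∀ p, s p ∈ Fx x)
    (σ : ℝ → ℝ) (hσ : IsHermiteSpline x σ)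
    (hconv : TendstoUniformlyOn s σ atTop (Set.Icc (x 0) (x (Fin.last n)))) :
    σ ∈ Fx x := by
  refine ⟨hσ, fun δ hδ hδσ => ?_⟩
  let competitor : ℕ → ℝ → ℝ := fun p => δ + s p - σ
  have hcompetitor : ∀ p, IsHermiteSpline x (competitor p) := fun p => (hδ.add (hs p).1).sub hσ
  have hle : ∀ p, L1E x (s p) ≤ L1E x (competitor p) := fun p =>
    (hs p).2 _ (hcompetitor p) fun i => by simp [competitor, hδσ i]
  have hlim : ∀ t ∈ Icc (x 0) (x (Fin.last n)), Tendsto (fun p => s p t) atTop (𝓝 (σ t)) :=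
    fun t ht => hconv.tendsto_at ht
  have hlim' : ∀ t ∈ Icc (x 0) (x (Fin.last n)),
      Tendsto (fun p => competitor p t) atTop (𝓝 (δ t)) := fun t ht => by
    simpa [competitor] using ((hlim t ht).const_add (δ t)).sub_const (σ t)
  exact le_of_tendsto_of_tendsto' (tendsto_L1E hx (fun p => (hs p).1) hσ hlim)
    (tendsto_L1E hx hcompetitor hδ hlim') hle

/-- `F_x` is closed in `Her(x)`: a uniform limit (on `[a,b]`) of L¹ interpolation
splines which is itself a Hermite spline belongs to `F_x`. -/
theorem stmt8 {n : ℕ} (hn : 1 ≤ n) (x : Fin (n + 1) → ℝ) (hx : StrictMono x)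
    (s : ℕ → ℝ → ℝ) (hs : ∀ p, s p ∈ Fx x)
    (σ : ℝ → ℝ) (hσ : IsHermiteSpline x σ)
    (hconv : TendstoUniformlyOn s σ atTop (Set.Icc (x 0) (x (Fin.last n)))) :
    σ ∈ Fx x :=
  stmt8_general x hx s hs σ hσ hconv
end
end
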